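/- A cyclic string S of length 2σ^{k−1} over Σ = {0,…,σ−1} that is 2-branching at order k contains every (k−1)-gram of Σ^{k−1} exactly twice, and contains exactly 2σ^{k−1} distinct k-grams, each occurring exactly once. -/
import Mathlib


open List

/-- Block for symbol `a`: pairs (a,0)(a,1)⋯(a,σ-1) followed by a repeat of (a,σ-1). -/
def block (σ a : ℕ) : List ℕ :=
  ((List.range σ).flatMap fun b => [a, b]) ++ [a, σ - 1]

/-- The string S_σ: blocks for a = 0,…,σ-2 followed by the pair (σ-1,σ-1). -/
def Sstr (σ : ℕ) : List ℕ :=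
  ((List.range (σ - 1)).flatMap fun a => block σ a) ++ [σ - 1, σ - 1]

/-- Rotation of `S` by offset `i`. -/
def rot (S : List ℕ) (i : ℕ) : List ℕ := S.drop i ++ S.take i

/-- Cyclic k-gram of `S` starting at position `i` (indices mod `S.length`). -/
def cyc (S : List ℕ) (i k : ℕ) : List ℕ :=
  (List.range k).map fun j => S.getD ((i + j) % S.length) 0

/-- Number of cyclic occurrences of `u` in `S`. -/
def cOcc (S u : List ℕ) : ℕ :=
  ((List.range S.length).filter fun i => cyc S i u.length = u).length

/-- `u` occurs as a cyclic substring of `S`. -/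
def cOccurs (S u : List ℕ) : Prop := 0 < cOcc S u

/-- Number of runs (maximal blocks of equal symbols) of a list. -/
def runsCount (l : List ℕ) : ℕ := (l.destutter (· ≠ ·)).length

/-- Cyclic Burrows–Wheeler transform: sort all rotations lexicographically,
read the last column. -/
def cBWT (S : List ℕ) : List ℕ :=
  (((List.range S.length).map fun i => rot S i).insertionSort (· ≤ ·)).map
    fun ρ => ρ.getD (S.length - 1) 0

/-- Terminated string `t$`: symbols shifted by +1 and sentinel `0 = $` appended,
so the sentinel is strictly smaller than all alphabet symbols. -/
def term (t : List ℕ) : List ℕ := (t.map (· + 1)) ++ [0]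

/-- BWT of the terminated string `t$`: last column of the sorted rotation matrix. -/
def bwt (t : List ℕ) : List ℕ :=
  (((List.range (term t).length).map fun i => rot (term t) i).insertionSort (· ≤ ·)).map
    fun ρ => ρ.getD ((term t).length - 1) 0

/-- `x` is right-maximal in `w`: two distinct right extensions of `x` occur in `w`. -/
def RightMaximal (w x : List ℕ) : Prop :=
  ∃ a b : ℕ, a ≠ b ∧ (x ++ [a]) <:+: w ∧ (x ++ [b]) <:+: w

/-- The set of right-extensions of `w`. -/
def ExtSet (w : List ℕ) : Set (List ℕ) :=
  {y | ∃ x a, RightMaximal w x ∧ y = x ++ [a] ∧ y <:+: w}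

/-- Super-maximal right-extensions: right-extensions that are not a proper suffix
of another right-extension. -/
def SuperMax (w : List ℕ) : Set (List ℕ) :=
  {y ∈ ExtSet w | ∀ z ∈ ExtSet w, y <:+ z → y = z}

/-- χ: size of a smallest suffixient set = number of super-maximal right-extensions. -/
noncomputable def chi (w : List ℕ) : ℕ := (SuperMax w).ncard

/-- The regular cBWT block: each of 0,…,σ-1 twice in increasing order. -/
def patBlock (σ : ℕ) : List ℕ := (List.range σ).flatMap fun c => [c, c]

/-- The final irregular cBWT block: each of 0,…,σ-3 twice, then σ-2, σ-1, σ-2. -/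
def patFinal (σ : ℕ) : List ℕ :=
  ((List.range (σ - 2)).flatMap fun c => [c, c]) ++ [σ - 2, σ - 1, σ - 2]

/-- The canonical cBWT pattern: (σ-1) · (regular block)^m · final block. -/
def pattern (σ m : ℕ) : List ℕ :=
  [σ - 1] ++ (List.replicate m (patBlock σ)).flatten ++ patFinal σ

/-- `S` is 2-branching at order `k` over alphabet {0,…,σ-1}: every (k-1)-gram
occurs and its set of k-gram extensions is {u[0], (u[0]+1) mod σ}. -/
def TwoBranching (σ k : ℕ) (S : List ℕ) : Prop :=
  ∀ u : List ℕ, u.length = k - 1 → (∀ x ∈ u, x < σ) →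
    cOccurs S u ∧ ∀ c, c < σ →
      (cOccurs S (u ++ [c]) ↔ c = u.headD 0 ∨ c = (u.headD 0 + 1) % σ)

/-- Auxiliary: the fiber of positions where the cyclic `m`-gram equals `u`. -/
def fib (S : List ℕ) (m : ℕ) (u : List ℕ) : Finset ℕ :=
  (Finset.range S.length).filter fun i => cyc S i m = u

/-- Auxiliary: the extension character of the k-gram starting at `j`. -/
def gext (S : List ℕ) (k j : ℕ) : ℕ := S.getD ((j + (k - 1)) % S.length) 0

lemma cOcc_card (S u : List ℕ) : cOcc S u = (fib S u.length u).card := rfl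

lemma cyc_len (S : List ℕ) (i k : ℕ) : (cyc S i k).length = k := by simp [cyc]

lemma cyc_succ (S : List ℕ) (i m : ℕ) :
    cyc S i (m+1) = cyc S i m ++ [S.getD ((i+m) % S.length) 0] := by
  simp [cyc, List.range_succ]

lemma cyc_mem (S : List ℕ) (hS : 0 < S.length) (i m : ℕ) :
    ∀ x ∈ cyc S i m, x ∈ S := by
  intro x hx
  simp only [cyc, List.mem_map, List.mem_range] at hx
  obtain ⟨j, hj, rfl⟩ := hx
  rw [List.getD_eq_getElem _ _ (Nat.mod_lt _ hS)]
  exact List.getElem_mem _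

lemma cOccurs_iff (S u : List ℕ) :
    cOccurs S u ↔ ∃ i ∈ Finset.range S.length, cyc S i u.length = u := by
  rw [cOccurs, cOcc_card, Finset.card_pos]
  constructor
  · rintro ⟨i, hi⟩
    rw [fib, Finset.mem_filter] at hi
    exact ⟨i, hi.1, hi.2⟩
  · rintro ⟨i, h1, h2⟩
    exact ⟨i, by rw [fib, Finset.mem_filter]; exact ⟨h1, h2⟩⟩


/-- a cyclic string S of length 2σ^{k-1} over {0,…,σ-1} that is
2-branching at order k contains every (k-1)-gram over Σ exactly twice, every
occurring k-gram exactly once, and exactly 2σ^{k-1} distinct k-grams. -/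
theorem stmt12 (σ k : ℕ) (hσ : 2 ≤ σ) (hk : 2 ≤ k) (S : List ℕ)
    (hlen : S.length = 2 * σ ^ (k - 1)) (hS : ∀ x ∈ S, x < σ)
    (hbr : TwoBranching σ k S) :
    (∀ u : List ℕ, u.length = k - 1 → (∀ x ∈ u, x < σ) → cOcc S u = 2) ∧
    (∀ i, i < S.length → cOcc S (cyc S i k) = 1) ∧
    ((Finset.range S.length).image (fun i => cyc S i k)).card
      = 2 * σ ^ (k - 1) := by
  have hk1 : k - 1 + 1 = k := by omega
  have hσ0 : 0 < σ := by omega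
  have npos : 0 < S.length := by
    rw [hlen]
    have := Nat.pow_pos (n := k - 1) hσ0
    omega
  have hdec : ∀ i, cyc S i k = cyc S i (k-1) ++ [gext S k i] := by
    intro i
    conv_lhs => rw [← hk1]
    exact cyc_succ S i (k-1)
  have hmemσ : ∀ i m x, x ∈ cyc S i m → x < σ :=
    fun i m x hx => hS x (cyc_mem S npos i m x hx)
  have hsplit : ∀ i (u : List ℕ) (c : ℕ), u.length = k - 1 →
      (cyc S i k = u ++ [c] ↔ cyc S i (k-1) = u ∧ gext S k i = c) := by
    intro i u c hu
    rw [hdec i]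
    constructor
    · intro h
      have h2 := List.append_inj h (by rw [cyc_len, hu])
      refine ⟨h2.1, ?_⟩
      have := h2.2
      simpa using this
    · rintro ⟨h1, h2⟩
      rw [h1, h2]
  -- the finset of all (k-1)-grams over the alphabet
  set G : Finset (List ℕ) :=
    (Finset.univ : Finset (Fin (k-1) → Fin σ)).image
      (fun f => List.ofFn fun j => (f j : ℕ)) with hGdef
  have hGcard : G.card = σ ^ (k-1) := by
    rw [hGdef, Finset.card_image_of_injective _ (fun f g h => ?_), Finset.card_univ]
    · simp
    · funext j
      exact Fin.ext (congrFun (List.ofFn_injective h) j)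
  have hGmem : ∀ u : List ℕ, u ∈ G ↔ (u.length = k - 1 ∧ ∀ x ∈ u, x < σ) := by
    intro u
    constructor
    · intro hu
      rw [hGdef, Finset.mem_image] at hu
      obtain ⟨f, _, rfl⟩ := hu
      refine ⟨by simp, ?_⟩
      intro x hx
      rw [List.mem_ofFn] at hx
      obtain ⟨j, rfl⟩ := hx
      exact (f j).isLt
    · rintro ⟨h1, h2⟩
      rw [hGdef, Finset.mem_image]
      refine ⟨fun j => ⟨u.getD j 0, ?_⟩, Finset.mem_univ _, ?_⟩
      · have hjlt : (j : ℕ) < u.length := by rw [h1]; exact j.isLt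
        rw [List.getD_eq_getElem _ _ hjlt]
        exact h2 _ (List.getElem_mem _)
      · apply List.ext_getElem (by simp [h1])
        intro m h1' h2'
        simp only [List.getElem_ofFn]
        rw [List.getD_eq_getElem _ _ h2']
  -- an occurrence of u++[c] gives a member of the fiber of u whose extension char is c
  have hextocc : ∀ u : List ℕ, u.length = k-1 → ∀ c, cOccurs S (u ++ [c]) →
      ∃ i ∈ fib S (k-1) u, gext S k i = c := by
    intro u hu c hc
    rw [cOccurs_iff] at hc
    obtain ⟨i, hi, hcy⟩ := hc
    rw [List.length_append, hu, List.length_singleton, hk1] at hcy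
    rw [hsplit i u c hu] at hcy
    exact ⟨i, by rw [fib, Finset.mem_filter]; exact ⟨hi, hcy.1⟩, hcy.2⟩
  -- two positions in each fiber with distinct extension characters
  have hpair : ∀ u ∈ G, ∃ i1 ∈ fib S (k-1) u, ∃ i2 ∈ fib S (k-1) u,
      gext S k i1 ≠ gext S k i2 := by
    intro u hu
    rw [hGmem] at hu
    obtain ⟨h1, h2⟩ := hu
    obtain ⟨hocc, hext⟩ := hbr u h1 h2
    have hune : u ≠ [] := by
      intro h; rw [h] at h1; simp at h1; omega
    have hc1σ : u.headD 0 < σ := by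
      cases u with
      | nil => exact absurd rfl hune
      | cons a t => exact h2 a (by simp)
    have hc2σ : (u.headD 0 + 1) % σ < σ := Nat.mod_lt _ hσ0
    have hne : u.headD 0 ≠ (u.headD 0 + 1) % σ := by
      rcases Nat.lt_or_ge (u.headD 0 + 1) σ with h | h
      · rw [Nat.mod_eq_of_lt h]; omega
      · have he : u.headD 0 + 1 = σ := by omega
        rw [he, Nat.mod_self]; omega
    obtain ⟨i1, hi1, hg1⟩ := hextocc u h1 _ ((hext _ hc1σ).mpr (Or.inl rfl))
    obtain ⟨i2, hi2, hg2⟩ := hextocc u h1 _ ((hext _ hc2σ).mpr (Or.inr rfl))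
    exact ⟨i1, hi1, i2, hi2, by rw [hg1, hg2]; exact hne⟩
  have hfib2 : ∀ u ∈ G, 2 ≤ (fib S (k-1) u).card := by
    intro u hu
    obtain ⟨i1, hi1, i2, hi2, hne⟩ := hpair u hu
    exact Finset.one_lt_card.mpr ⟨i1, hi1, i2, hi2, fun h => hne (by rw [h])⟩
  have hmaps : ∀ i ∈ Finset.range S.length, cyc S i (k-1) ∈ G := by
    intro i _
    rw [hGmem]
    exact ⟨cyc_len S i (k-1), fun x hx => hmemσ i (k-1) x hx⟩
  have hsum : (Finset.range S.length).card = ∑ u ∈ G, (fib S (k-1) u).card := by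
    rw [Finset.card_eq_sum_card_fiberwise hmaps]
    rfl
  have hall2 : ∀ u ∈ G, (fib S (k-1) u).card = 2 := by
    have hsums : ∑ _u ∈ G, (2:ℕ) = ∑ u ∈ G, (fib S (k-1) u).card := by
      rw [← hsum, Finset.sum_const, smul_eq_mul, hGcard, Finset.card_range, hlen]
      ring
    intro u hu
    exact ((Finset.sum_eq_sum_iff_of_le hfib2).mp hsums u hu).symm
  -- Part 1
  have part1 : ∀ u : List ℕ, u.length = k - 1 → (∀ x ∈ u, x < σ) → cOcc S u = 2 := by
    intro u h1 h2
    rw [cOcc_card, h1]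
    exact hall2 u ((hGmem u).mpr ⟨h1, h2⟩)
  -- Part 2 : the fiber of each occurring k-gram is a singleton
  have hone : ∀ i, i < S.length → fib S k (cyc S i k) = {i} := by
    intro i hi
    have huG : cyc S i (k-1) ∈ G := hmaps i (Finset.mem_range.mpr hi)
    obtain ⟨a, b, hab, hFab⟩ := Finset.card_eq_two.mp (hall2 _ huG)
    obtain ⟨i1, hi1, i2, hi2, hne⟩ := hpair _ huG
    have h12 : i1 ≠ i2 := fun h => hne (by rw [h])
    have hgab : gext S k a ≠ gext S k b := by
      rw [hFab] at hi1 hi2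
      simp only [Finset.mem_insert, Finset.mem_singleton] at hi1 hi2
      rcases hi1 with rfl | rfl <;> rcases hi2 with rfl | rfl
      · exact absurd rfl h12
      · exact hne
      · exact fun h => hne h.symm
      · exact absurd rfl h12
    have hgdist : ∀ x ∈ fib S (k-1) (cyc S i (k-1)), ∀ y ∈ fib S (k-1) (cyc S i (k-1)),
        x ≠ y → gext S k x ≠ gext S k y := by
      intro x hx y hy hxy
      rw [hFab] at hx hy
      simp only [Finset.mem_insert, Finset.mem_singleton] at hx hy
      rcases hx with rfl | rfl <;> rcases hy with rfl | rfl
      · exact absurd rfl hxy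
      · exact hgab
      · exact fun h => hgab h.symm
      · exact absurd rfl hxy
    apply Finset.eq_singleton_iff_unique_mem.mpr
    constructor
    · rw [fib, Finset.mem_filter]
      exact ⟨Finset.mem_range.mpr hi, rfl⟩
    · intro j hj
      rw [fib, Finset.mem_filter] at hj
      have hjk : cyc S j k = cyc S i (k-1) ++ [gext S k i] := by
        rw [hj.2]; exact hdec i
      have hsp := (hsplit j (cyc S i (k-1)) (gext S k i) (cyc_len S i (k-1))).mp hjk
      by_contra hji
      have hjF : j ∈ fib S (k-1) (cyc S i (k-1)) := by
        rw [fib, Finset.mem_filter]; exact ⟨hj.1, hsp.1⟩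
      have hiF : i ∈ fib S (k-1) (cyc S i (k-1)) := by
        rw [fib, Finset.mem_filter]; exact ⟨Finset.mem_range.mpr hi, rfl⟩
      exact hgdist j hjF i hiF hji hsp.2
  have part2 : ∀ i, i < S.length → cOcc S (cyc S i k) = 1 := by
    intro i hi
    have h : cOcc S (cyc S i k) = (fib S k (cyc S i k)).card := by
      rw [cOcc_card, cyc_len]
    rw [h, hone i hi, Finset.card_singleton]
  -- Part 3
  refine ⟨part1, part2, ?_⟩
  rw [Finset.card_image_of_injOn, Finset.card_range, hlen]
  intro x hx y hy hxy
  rw [Finset.mem_coe, Finset.mem_range] at hx hy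
  have hyF : y ∈ fib S k (cyc S x k) := by
    rw [fib, Finset.mem_filter]
    exact ⟨Finset.mem_range.mpr hy, hxy.symm⟩
  rw [hone x hx] at hyF
  exact (Finset.mem_singleton.mp hyF).symm
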